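/- (Uniform sup-norm bound on log-likelihood ratios over the model class). Let B_n = max(A_Σ, 1+K·A_G)·(1 + q√q·(M_n + A_β)²·A_Σ) for M_n > 0. Then for every s_ψ ∈ S with ψ ∈ Ψ̃, every x ∈ [0,1]^p, and every y ∈ ℝ^q with ‖y‖_∞ ≤ M_n: |ln s_ψ(y|x) − ln s_{ψ_0}(y|x)| ≤ 2·K·B_n·(A_γ + q·A_β + q√q/a_Σ). In particular, on the event T = {max_i ‖Y_i‖_∞ ≤ M_n}, sup_{f ∈ F_m} ‖f‖_∞·1_T ≤ 2·K·B_n·(A_γ + q·A_β + q√q/a_Σ) for every m ∈ ℕ*. -/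

import Mathlib

open MeasureTheory Real Finset ProbabilityTheory

noncomputable section

/-- Multivariate Gaussian density on `ℝ^q` with mean `mu` and covariance `S`. -/
def gaussPdf (q : ℕ) (mu : Fin q → ℝ) (S : Matrix (Fin q) (Fin q) ℝ) (y : Fin q → ℝ) : ℝ :=
  (2 * π) ^ (-(q : ℝ) / 2) * S.det ^ (-(1 : ℝ) / 2) *
    Real.exp (-(dotProduct (y - mu) (S⁻¹.mulVec (y - mu))) / 2)

/-- Parameters of a `K`-component softmax-gated mixture of Gaussian experts. -/
structure SGaMEParam (K p q : ℕ) where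
  g0 : Fin K → ℝ
  g : Fin K → Fin p → ℝ
  b0 : Fin K → Fin q → ℝ
  b : Fin K → Matrix (Fin q) (Fin p) ℝ
  cov : Fin K → Matrix (Fin q) (Fin q) ℝ

namespace SGaMEParam
variable {K p q : ℕ}

/-- Gating logit `w_k(x) = γ_{k0} + γ_kᵀ x`. -/
def logit (ψ : SGaMEParam K p q) (k : Fin K) (x : Fin p → ℝ) : ℝ :=
  ψ.g0 k + ∑ j, ψ.g k j * x j

/-- Softmax gating function `g_k(x;γ)`. -/
def gate (ψ : SGaMEParam K p q) (k : Fin K) (x : Fin p → ℝ) : ℝ :=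
  Real.exp (ψ.logit k x) / ∑ l, Real.exp (ψ.logit l x)

/-- Mean of the `k`-th Gaussian expert. -/
def mean (ψ : SGaMEParam K p q) (k : Fin K) (x : Fin p → ℝ) : Fin q → ℝ :=
  fun z => ψ.b0 k z + ((ψ.b k).mulVec x) z

/-- The SGaME conditional density `s_ψ(y|x)`. -/
def density (ψ : SGaMEParam K p q) (x : Fin p → ℝ) (y : Fin q → ℝ) : ℝ :=
  ∑ k, ψ.gate k x * gaussPdf q (ψ.mean k x) (ψ.cov k) y

/-- `‖ψ^{[1,2]}‖₁`, the ℓ1-norm of the gating and expert regression coefficients. -/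
def norm12 (ψ : SGaMEParam K p q) : ℝ :=
  (∑ k, ∑ j, |ψ.g k j|) + (∑ k, ∑ j, ∑ z, |ψ.b k z j|)

end SGaMEParam

/-- The unit cube `[0,1]^p`. -/
def cube (p : ℕ) : Set (Fin p → ℝ) := Set.Icc 0 1

/-- The bounded parameter class `Ψ̃`. -/
def InPsiT {K p q : ℕ} (Agam Abeta aSig ASig : ℝ) (ψ : SGaMEParam K p q) : Prop :=
  (∀ k, (ψ.cov k).IsSymm ∧ (ψ.cov k).PosDef) ∧
  (∀ k, ∀ x ∈ cube p, |ψ.g0 k| + |∑ j, ψ.g k j * x j| ≤ Agam) ∧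
  (∀ k, ∀ x ∈ cube p, ∀ z, |ψ.b0 k z| + |((ψ.b k).mulVec x) z| ≤ Abeta) ∧
  (∀ k, ∀ μ ∈ spectrum ℝ ((ψ.cov k)⁻¹), aSig ≤ μ ∧ μ ≤ ASig)

/-- Average conditional Kullback–Leibler divergence for fixed covariates. -/
def KLn {p q : ℕ} (n : ℕ) (x : Fin n → Fin p → ℝ)
    (s t : (Fin p → ℝ) → (Fin q → ℝ) → ℝ) : ℝ :=
  (1 / n : ℝ) * ∑ i, ∫ y : Fin q → ℝ, Real.log (s (x i) y / t (x i) y) * s (x i) y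

/-- Upper bound `A_G` on the softmax gating functions. -/
def AGbd (K : ℕ) (Agam : ℝ) : ℝ := Real.exp Agam / (K * Real.exp (-Agam))

/-- `H_{s_0}`. -/
def Hs0 (q : ℕ) (ASig : ℝ) : ℝ :=
  max 0 (Real.log ((4 * π) ^ (-(q : ℝ) / 2) * ASig ^ ((q : ℝ) / 2)))

end

/-!
Every density of the class is a softmax-weighted, hence convex, combination of Gaussian
densities whose inverse covariances have spectrum in `[aSig, ASig]` and whose means are
bounded by `Abeta` on the cube. For `‖y‖∞ ≤ Mn` each Gaussian value therefore lies in
`[c aSig^(q/2) exp(-ASig q (Mn + Abeta)² / 2), c ASig^(q/2)]` with `c = (2π)^(-q/2)`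
(determinant and quadratic form are controlled by the spectrum), and so does the mixture.
Logarithms of two numbers of this interval differ by at most
`(q/2) log (ASig/aSig) + ASig q (Mn + Abeta)² / 2`, which is dominated by the stated constant.
-/

open Matrix
open scoped MatrixOrder

theorem Matrix.IsHermitian.dotProduct_mulVec_le {n : Type*} [Fintype n] [DecidableEq n]
    {T : Matrix n n ℝ} (hT : T.IsHermitian) {A : ℝ} (hA : ∀ μ ∈ spectrum ℝ T, μ ≤ A)
    (v : n → ℝ) : v ⬝ᵥ T *ᵥ v ≤ A * (v ⬝ᵥ v) := by
  have hle : T ≤ algebraMap ℝ (Matrix n n ℝ) A := le_algebraMap_of_spectrum_le hA hT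
  have := (Matrix.le_iff.1 hle).dotProduct_mulVec_nonneg v
  simpa [Algebra.algebraMap_eq_smul_one, sub_mulVec, smul_mulVec, dotProduct_smul] using this

theorem Matrix.IsHermitian.det_mem_Icc {n : Type*} [Fintype n] [DecidableEq n]
    {T : Matrix n n ℝ} (hT : T.IsHermitian) {a A : ℝ} (ha : 0 ≤ a)
    (hspec : spectrum ℝ T ⊆ Set.Icc a A) :
    T.det ∈ Set.Icc (a ^ Fintype.card n) (A ^ Fintype.card n) := by
  have hev i := hspec (hT.eigenvalues_mem_spectrum_real i)
  rw [hT.det_eq_prod_eigenvalues]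
  simp only [RCLike.ofReal_real_eq_id, id]
  rw [← Finset.card_univ, ← Finset.prod_const, ← Finset.prod_const]
  exact ⟨Finset.prod_le_prod (fun _ _ => ha) (fun i _ => (hev i).1),
    Finset.prod_le_prod (fun i _ => ha.trans (hev i).1) (fun i _ => (hev i).2)⟩

theorem Matrix.PosDef.det_rpow_neg_half_mem_Icc {n : Type*} [Fintype n] [DecidableEq n]
    {S : Matrix n n ℝ} (hS : S.PosDef) {a A : ℝ} (ha : 0 ≤ a) (hA : 0 ≤ A)
    (hspec : spectrum ℝ S⁻¹ ⊆ Set.Icc a A) :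
    S.det ^ (-(1 : ℝ) / 2) ∈
      Set.Icc (a ^ ((Fintype.card n : ℝ) / 2)) (A ^ ((Fintype.card n : ℝ) / 2)) := by
  have hdet := hS.inv.isHermitian.det_mem_Icc ha hspec
  have hinv : S.det ^ (-(1 : ℝ) / 2) = S⁻¹.det ^ ((1 : ℝ) / 2) := by
    rw [det_nonsing_inv, Ring.inverse_eq_inv', Real.inv_rpow hS.det_pos.le, neg_div,
      Real.rpow_neg hS.det_pos.le]
  have hhalf {b : ℝ} (hb : 0 ≤ b) :
      b ^ ((Fintype.card n : ℝ) / 2) = (b ^ Fintype.card n) ^ ((1 : ℝ) / 2) := by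
    rw [← Real.rpow_natCast, ← Real.rpow_mul hb, mul_one_div]
  rw [hinv, hhalf ha, hhalf hA]
  exact ⟨Real.rpow_le_rpow (by positivity) hdet.1 (by norm_num),
    Real.rpow_le_rpow hS.inv.det_pos.le hdet.2 (by norm_num)⟩

theorem gaussPdf_mem_Icc {q : ℕ} {mu y : Fin q → ℝ} {S : Matrix (Fin q) (Fin q) ℝ}
    (hS : S.PosDef) {a A R : ℝ} (ha : 0 ≤ a) (hA : 0 ≤ A)
    (hspec : spectrum ℝ S⁻¹ ⊆ Set.Icc a A) (hR : (y - mu) ⬝ᵥ (y - mu) ≤ R) :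
    gaussPdf q mu S y ∈ Set.Icc
      ((2 * π) ^ (-(q : ℝ) / 2) * a ^ ((q : ℝ) / 2) * Real.exp (-(A * R) / 2))
      ((2 * π) ^ (-(q : ℝ) / 2) * A ^ ((q : ℝ) / 2)) := by
  have hdet := hS.det_rpow_neg_half_mem_Icc ha hA hspec
  rw [Fintype.card_fin] at hdet
  have hquad_nonneg : 0 ≤ (y - mu) ⬝ᵥ S⁻¹ *ᵥ (y - mu) := hS.inv.posSemidef.dotProduct_mulVec_nonneg _
  have hquad_le : (y - mu) ⬝ᵥ S⁻¹ *ᵥ (y - mu) ≤ A * R :=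
    (hS.inv.isHermitian.dotProduct_mulVec_le (fun μ hμ => (hspec hμ).2) _).trans
      (mul_le_mul_of_nonneg_left hR hA)
  have hexp_le_one : Real.exp (-((y - mu) ⬝ᵥ S⁻¹ *ᵥ (y - mu)) / 2) ≤ 1 :=
    Real.exp_le_one_iff.2 (by linarith)
  have hnorm_pos : 0 < (2 * π) ^ (-(q : ℝ) / 2) * S.det ^ (-(1 : ℝ) / 2) :=
    mul_pos (by positivity) (Real.rpow_pos_of_pos hS.det_pos _)
  unfold gaussPdf
  constructor
  · calc _ ≤ (2 * π) ^ (-(q : ℝ) / 2) * S.det ^ (-(1 : ℝ) / 2) * Real.exp (-(A * R) / 2) := by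
          gcongr; exact hdet.1
      _ ≤ _ := by gcongr
  · calc _ ≤ (2 * π) ^ (-(q : ℝ) / 2) * S.det ^ (-(1 : ℝ) / 2) :=
          mul_le_of_le_one_right hnorm_pos.le hexp_le_one
      _ ≤ _ := by gcongr; exact hdet.2

theorem dotProduct_self_le_of_abs_le {n : Type*} [Fintype n] {v : n → ℝ} {c : ℝ}
    (hv : ∀ i, |v i| ≤ c) : v ⬝ᵥ v ≤ Fintype.card n * c ^ 2 := by
  have hterm i : v i * v i ≤ c ^ 2 := by
    rw [← abs_mul_abs_self, ← sq]
    exact pow_le_pow_left₀ (abs_nonneg _) (hv i) 2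
  simpa [dotProduct] using Finset.sum_le_sum fun i (_ : i ∈ Finset.univ) => hterm i

theorem abs_log_sub_log_le {L U s t : ℝ} (hL : 0 < L) (hs : s ∈ Set.Icc L U)
    (ht : t ∈ Set.Icc L U) : |Real.log s - Real.log t| ≤ Real.log U - Real.log L :=
  abs_sub_le_of_le_of_le (Real.log_le_log hL hs.1) (Real.log_le_log (hL.trans_le hs.1) hs.2)
    (Real.log_le_log hL ht.1) (Real.log_le_log (hL.trans_le ht.1) ht.2)

namespace SGaMEParam

variable {K p q : ℕ}

theorem gate_nonneg (ψ : SGaMEParam K p q) (k : Fin K) (x : Fin p → ℝ) : 0 ≤ ψ.gate k x := by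
  unfold gate
  positivity

theorem sum_gate (ψ : SGaMEParam K p q) (hK : 0 < K) (x : Fin p → ℝ) :
    ∑ k, ψ.gate k x = 1 := by
  have hpos : 0 < ∑ l, Real.exp (ψ.logit l x) :=
    Finset.sum_pos (fun _ _ => Real.exp_pos _) ⟨⟨0, hK⟩, Finset.mem_univ _⟩
  simp only [gate, ← Finset.sum_div, div_self hpos.ne']

theorem density_mem_of_convex (ψ : SGaMEParam K p q) (hK : 0 < K) {s : Set ℝ}
    (hs : Convex ℝ s) {x : Fin p → ℝ} {y : Fin q → ℝ}
    (h : ∀ k, gaussPdf q (ψ.mean k x) (ψ.cov k) y ∈ s) : ψ.density x y ∈ s :=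
  hs.sum_mem (fun k _ => ψ.gate_nonneg k x) (ψ.sum_gate hK x) fun k _ => h k

end SGaMEParam

namespace InPsiT

variable {K p q : ℕ} {Agam Abeta aSig ASig : ℝ} {ψ : SGaMEParam K p q}

theorem aSig_le_ASig (hψ : InPsiT Agam Abeta aSig ASig ψ) (hK : 0 < K) (hq : 0 < q) :
    aSig ≤ ASig :=
  have hT := (hψ.1 ⟨0, hK⟩).2.inv.isHermitian
  let ⟨hlo, hhi⟩ := hψ.2.2.2 _ _ (hT.eigenvalues_mem_spectrum_real ⟨0, hq⟩)
  hlo.trans hhi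

theorem abs_mean_le (hψ : InPsiT Agam Abeta aSig ASig ψ) (k : Fin K) {x : Fin p → ℝ}
    (hx : x ∈ cube p) (z : Fin q) : |ψ.mean k x z| ≤ Abeta :=
  (abs_add_le _ _).trans (hψ.2.2.1 k x hx z)

theorem density_mem_Icc (hψ : InPsiT Agam Abeta aSig ASig ψ) (hK : 0 < K)
    (haSig : 0 ≤ aSig) (hASig : 0 ≤ ASig) {x : Fin p → ℝ} (hx : x ∈ cube p)
    {y : Fin q → ℝ} {Mn : ℝ} (hy : ∀ z, |y z| ≤ Mn) :
    ψ.density x y ∈ Set.Icc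
      ((2 * π) ^ (-(q : ℝ) / 2) * aSig ^ ((q : ℝ) / 2) *
        Real.exp (-(ASig * (q * (Mn + Abeta) ^ 2)) / 2))
      ((2 * π) ^ (-(q : ℝ) / 2) * ASig ^ ((q : ℝ) / 2)) := by
  refine ψ.density_mem_of_convex hK (convex_Icc _ _) fun k => ?_
  have hdist : (y - ψ.mean k x) ⬝ᵥ (y - ψ.mean k x) ≤ q * (Mn + Abeta) ^ 2 := by
    have := dotProduct_self_le_of_abs_le (v := y - ψ.mean k x) fun z =>
      (abs_sub _ _).trans (add_le_add (hy z) (hψ.abs_mean_le k hx z))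
    rwa [Fintype.card_fin] at this
  exact gaussPdf_mem_Icc (hψ.1 k).2 haSig hASig (hψ.2.2.2 k) hdist

end InPsiT

theorem log_sub_log_gaussPdf_bounds (q : ℕ) {a A R : ℝ} (ha : 0 < a) (hA : 0 < A) :
    Real.log ((2 * π) ^ (-(q : ℝ) / 2) * A ^ ((q : ℝ) / 2)) -
        Real.log ((2 * π) ^ (-(q : ℝ) / 2) * a ^ ((q : ℝ) / 2) * Real.exp (-(A * R) / 2)) =
      q / 2 * Real.log (A / a) + A * R / 2 := by
  have hc : 0 < (2 * π) ^ (-(q : ℝ) / 2) := by positivity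
  rw [Real.log_mul (by positivity) (by positivity), Real.log_mul (by positivity) (by positivity),
    Real.log_mul hc.ne' (by positivity), Real.log_rpow ha, Real.log_rpow hA, Real.log_exp,
    Real.log_div hA.ne' ha.ne']
  ring

theorem log_ratio_le_sgame_constant {K q : ℕ} (hK : 0 < K) (hq : 0 < q) {Agam Abeta a A X M : ℝ}
    (hAgam : 0 ≤ Agam) (hAbeta : 0 ≤ Abeta) (ha : 0 < a) (haA : a ≤ A) :
    q / 2 * Real.log (A / a) + A * (q * M ^ 2) / 2 ≤
      2 * K * (max A X * (1 + q * Real.sqrt q * M ^ 2 * A)) *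
        (Agam + q * Abeta + q * Real.sqrt q / a) := by
  have hq1 : (1 : ℝ) ≤ q := Nat.one_le_cast.2 hq
  have hK1 : (1 : ℝ) ≤ K := Nat.one_le_cast.2 hK
  have hs1 : 1 ≤ Real.sqrt q := Real.one_le_sqrt.2 hq1
  have hss : Real.sqrt q * Real.sqrt q = q := Real.mul_self_sqrt (by positivity)
  have hA : 0 < A := ha.trans_le haA
  have hr1 : 1 ≤ A / a := (one_le_div ha).2 haA
  have hlog : Real.log (A / a) ≤ A / a := Real.log_le_self (by positivity)
  have hmiddle : 2 * 1 * (A * (1 + q * Real.sqrt q * M ^ 2 * A)) * (q * Real.sqrt q / a) =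
      2 * q * Real.sqrt q * (A / a) + 2 * q * q * q * M ^ 2 * A * (A / a) := by
    linear_combination (2 * A ^ 2 * q ^ 2 * M ^ 2 / a) * hss
  have hlog_term : q / 2 * (A / a) ≤ 2 * q * Real.sqrt q * (A / a) := by
    nlinarith [mul_nonneg (mul_nonneg (by positivity : (0 : ℝ) ≤ q) (sub_nonneg.2 hs1))
      (by positivity : (0 : ℝ) ≤ A / a)]
  have hquad_term : A * (q * M ^ 2) / 2 ≤ 2 * q * q * q * M ^ 2 * A * (A / a) := by
    have hqqr : 1 ≤ q * q * (A / a) := by nlinarith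
    have hAqM : 0 ≤ A * q * M ^ 2 := by positivity
    nlinarith [mul_nonneg hAqM (sub_nonneg.2 hqqr)]
  calc q / 2 * Real.log (A / a) + A * (q * M ^ 2) / 2
      ≤ q / 2 * (A / a) + A * (q * M ^ 2) / 2 := by gcongr
    _ ≤ 2 * 1 * (A * (1 + q * Real.sqrt q * M ^ 2 * A)) * (q * Real.sqrt q / a) := by
      rw [hmiddle]; linarith
    _ ≤ 2 * K * (max A X * (1 + q * Real.sqrt q * M ^ 2 * A)) *
        (Agam + q * Abeta + q * Real.sqrt q / a) := by
      gcongr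
      · exact le_max_left _ _
      · exact le_add_of_nonneg_left (by positivity)

theorem InPsiT.abs_log_density_sub_le {K p q : ℕ} {Agam Abeta aSig ASig : ℝ}
    {ψ ψ' : SGaMEParam K p q} (hψ : InPsiT Agam Abeta aSig ASig ψ)
    (hψ' : InPsiT Agam Abeta aSig ASig ψ') (hK : 0 < K) (hq : 0 < q) (hAgam : 0 ≤ Agam)
    (hAbeta : 0 ≤ Abeta) (haSig : 0 < aSig) (hASig : 0 < ASig) {x : Fin p → ℝ}
    (hx : x ∈ cube p) {y : Fin q → ℝ} {Mn : ℝ} (hy : ∀ z, |y z| ≤ Mn) :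
    |Real.log (ψ.density x y) - Real.log (ψ'.density x y)| ≤
      2 * K * (max ASig (1 + K * AGbd K Agam) *
          (1 + q * Real.sqrt q * (Mn + Abeta) ^ 2 * ASig)) *
        (Agam + q * Abeta + q * Real.sqrt q / aSig) :=
  calc _ ≤ _ := abs_log_sub_log_le (by positivity)
        (hψ.density_mem_Icc hK haSig.le hASig.le hx hy)
        (hψ'.density_mem_Icc hK haSig.le hASig.le hx hy)
    _ = q / 2 * Real.log (ASig / aSig) + ASig * (q * (Mn + Abeta) ^ 2) / 2 :=
        log_sub_log_gaussPdf_bounds q haSig hASig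
    _ ≤ _ := log_ratio_le_sgame_constant hK hq hAgam hAbeta haSig (hψ.aSig_le_ASig hK hq)

theorem sgame_logratio_sup_norm_bound_general
    (K p q : ℕ) (hK : 1 ≤ K) (hq : 1 ≤ q)
    (Agam Abeta aSig ASig : ℝ)
    (hAgam : 0 < Agam) (hAbeta : 0 < Abeta) (haSig : 0 < aSig) (hASig : 0 < ASig)
    (Mn : ℝ)
    (ψ0 : SGaMEParam K p q) (hψ0 : InPsiT Agam Abeta aSig ASig ψ0) :
    (∀ ψ : SGaMEParam K p q, InPsiT Agam Abeta aSig ASig ψ →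
      ∀ x ∈ cube p, ∀ y : Fin q → ℝ, (∀ z, |y z| ≤ Mn) →
        |Real.log (ψ.density x y) - Real.log (ψ0.density x y)| ≤
          2 * K * (max ASig (1 + K * AGbd K Agam) *
              (1 + q * Real.sqrt q * (Mn + Abeta) ^ 2 * ASig)) *
            (Agam + q * Abeta + q * Real.sqrt q / aSig)) ∧
    -- in particular, a uniform bound over every ℓ1-ball S_m
    (∀ m : ℕ, 1 ≤ m →
      ∀ ψ : SGaMEParam K p q, InPsiT Agam Abeta aSig ASig ψ → ψ.norm12 ≤ m →
      ∀ x ∈ cube p, ∀ y : Fin q → ℝ, (∀ z, |y z| ≤ Mn) →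
        |Real.log (ψ0.density x y) - Real.log (ψ.density x y)| ≤
          2 * K * (max ASig (1 + K * AGbd K Agam) *
              (1 + q * Real.sqrt q * (Mn + Abeta) ^ 2 * ASig)) *
            (Agam + q * Abeta + q * Real.sqrt q / aSig)) := by
  exact ⟨fun ψ hψ x hx y hy =>
      hψ.abs_log_density_sub_le hψ0 hK hq hAgam.le hAbeta.le haSig hASig hx hy,
    fun _ _ ψ hψ _ x hx y hy =>
      hψ0.abs_log_density_sub_le hψ hK hq hAgam.le hAbeta.le haSig hASig hx hy⟩

/-- uniform sup-norm bound on log-likelihood ratios over the model class. -/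
theorem sgame_logratio_sup_norm_bound
    (K p q : ℕ) (hK : 1 ≤ K) (hp : 1 ≤ p) (hq : 1 ≤ q)
    (Agam Abeta aSig ASig : ℝ)
    (hAgam : 0 < Agam) (hAbeta : 0 < Abeta) (haSig : 0 < aSig) (hASig : 0 < ASig)
    (Mn : ℝ) (hMn : 0 < Mn)
    (ψ0 : SGaMEParam K p q) (hψ0 : InPsiT Agam Abeta aSig ASig ψ0) :
    (∀ ψ : SGaMEParam K p q, InPsiT Agam Abeta aSig ASig ψ →
      ∀ x ∈ cube p, ∀ y : Fin q → ℝ, (∀ z, |y z| ≤ Mn) →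
        |Real.log (ψ.density x y) - Real.log (ψ0.density x y)| ≤
          2 * K * (max ASig (1 + K * AGbd K Agam) *
              (1 + q * Real.sqrt q * (Mn + Abeta) ^ 2 * ASig)) *
            (Agam + q * Abeta + q * Real.sqrt q / aSig)) ∧
    -- in particular, a uniform bound over every ℓ1-ball S_m
    (∀ m : ℕ, 1 ≤ m →
      ∀ ψ : SGaMEParam K p q, InPsiT Agam Abeta aSig ASig ψ → ψ.norm12 ≤ m →
      ∀ x ∈ cube p, ∀ y : Fin q → ℝ, (∀ z, |y z| ≤ Mn) →
        |Real.log (ψ0.density x y) - Real.log (ψ.density x y)| ≤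
          2 * K * (max ASig (1 + K * AGbd K Agam) *
              (1 + q * Real.sqrt q * (Mn + Abeta) ^ 2 * ASig)) *
            (Agam + q * Abeta + q * Real.sqrt q / aSig)) :=
  sgame_logratio_sup_norm_bound_general K p q hK hq Agam Abeta aSig ASig hAgam hAbeta haSig hASig Mn
    ψ0 hψ0
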